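/- arXiv:2008.10854 — 6 statements merged into one kernel-verified Lean document; each statement's English description precedes it below -/
import Mathlib

section
/- Let T > 0, and let μ > -1 and ν > -1 be real numbers. Then there exists a constant C > 0 (depending only on μ, ν and T) such that for all 0 ≤ s < t ≤ T, ∫_s^t u^μ (t-u)^ν du ≤ C t^μ (t-s)^{ν+1}. -/
open MeasureTheory intervalIntegral

private lemma key_bd (μ t x : ℝ) (ht : 0 < t) (h1 : t / 2 ≤ x) (h2 : x ≤ t) :
    x ^ μ ≤ 2 ^ |μ| * t ^ μ := by
  have hx : 0 < x := lt_of_lt_of_le (by linarith) h1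
  rcases le_or_gt 0 μ with hμ0 | hμ0
  · rw [abs_of_nonneg hμ0]
    calc x ^ μ ≤ t ^ μ := Real.rpow_le_rpow hx.le h2 hμ0
    _ ≤ 2 ^ μ * t ^ μ := by
        nlinarith [Real.one_le_rpow (by norm_num : (1:ℝ) ≤ 2) hμ0,
          Real.rpow_nonneg ht.le μ]
  · rw [abs_of_neg hμ0]
    calc x ^ μ ≤ (t / 2) ^ μ :=
          Real.rpow_le_rpow_of_nonpos (by linarith) h1 hμ0.le
    _ = 2 ^ (-μ) * t ^ μ := by
        rw [div_eq_mul_inv, Real.mul_rpow ht.le (by norm_num),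
          Real.inv_rpow (by norm_num), ← Real.rpow_neg (by norm_num)]
        ring

private lemma integ_right (μ ν t a : ℝ) (hν : -1 < ν) (ht : 0 < t) (ha : t / 2 ≤ a)
    (hat : a ≤ t) :
    IntervalIntegrable (fun u => u ^ μ * (t - u) ^ ν) volume a t := by
  have h1 : IntervalIntegrable (fun u => (t - u) ^ ν) volume a t := by
    simpa using (intervalIntegrable_rpow' hν (a := t - a) (b := t - t)).comp_sub_left t
  refine h1.continuousOn_mul ?_
  refine ContinuousOn.rpow_const continuousOn_id fun x hx => Or.inl ?_
  rw [Set.uIcc_of_le hat] at hx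
  have : a ≤ x := hx.1
  intro h; rw [h] at this; linarith

private lemma integ_left (μ ν t s : ℝ) (hμ : -1 < μ) (ht : 0 < t) (hs : 0 ≤ s)
    (hst : s ≤ t / 2) :
    IntervalIntegrable (fun u => u ^ μ * (t - u) ^ ν) volume s (t / 2) := by
  refine (intervalIntegrable_rpow' hμ).mul_continuousOn ?_
  refine ContinuousOn.rpow_const (by fun_prop) fun x hx => Or.inl ?_
  rw [Set.uIcc_of_le hst] at hx
  have : x ≤ t / 2 := hx.2
  intro h
  nlinarith [sub_eq_zero.mp h]

private lemma val_right (ν t a : ℝ) (hν : -1 < ν) :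
    (∫ u in a..t, (t - u) ^ ν) = (t - a) ^ (ν + 1) / (ν + 1) := by
  have h := intervalIntegral.integral_comp_sub_left (fun x => x ^ ν) t (a := a) (b := t)
  simp only [sub_self] at h
  rw [h, integral_rpow (Or.inl hν), Real.zero_rpow (by linarith), sub_zero]

private lemma piece_right (μ ν t a : ℝ) (hν : -1 < ν) (ht : 0 < t) (ha : t / 2 ≤ a)
    (hat : a ≤ t) :
    (∫ u in a..t, u ^ μ * (t - u) ^ ν) ≤ 2 ^ |μ| * t ^ μ * ((t - a) ^ (ν + 1) / (ν + 1)) := by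
  have h1 : IntervalIntegrable (fun u => (t - u) ^ ν) volume a t := by
    simpa using (intervalIntegrable_rpow' hν (a := t - a) (b := t - t)).comp_sub_left t
  calc (∫ u in a..t, u ^ μ * (t - u) ^ ν)
      ≤ ∫ u in a..t, 2 ^ |μ| * t ^ μ * (t - u) ^ ν := by
        refine intervalIntegral.integral_mono_on hat (integ_right μ ν t a hν ht ha hat)
          (h1.const_mul _) fun u hu => ?_
        exact mul_le_mul_of_nonneg_right (key_bd μ t u ht (le_trans ha hu.1) hu.2)
          (Real.rpow_nonneg (by linarith [hu.2]) ν)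
    _ = 2 ^ |μ| * t ^ μ * ((t - a) ^ (ν + 1) / (ν + 1)) := by
        rw [intervalIntegral.integral_const_mul, val_right ν t a hν]

private lemma piece_left (μ ν t s : ℝ) (hμ : -1 < μ) (ht : 0 < t) (hs : 0 ≤ s)
    (hst : s ≤ t / 2) :
    (∫ u in s..(t / 2), u ^ μ * (t - u) ^ ν) ≤ 2 ^ |ν| * t ^ ν * (t ^ (μ + 1) / (μ + 1)) := by
  have hμ1 : (0:ℝ) < μ + 1 := by linarith
  calc (∫ u in s..(t / 2), u ^ μ * (t - u) ^ ν)
      ≤ ∫ u in s..(t / 2), u ^ μ * (2 ^ |ν| * t ^ ν) := by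
        refine intervalIntegral.integral_mono_on hst (integ_left μ ν t s hμ ht hs hst)
          ((intervalIntegrable_rpow' hμ).mul_const _) fun u hu => ?_
        exact mul_le_mul_of_nonneg_left
          (key_bd ν t (t - u) ht (by linarith [hu.2]) (by linarith [hu.1, hs]))
          (Real.rpow_nonneg (le_trans hs hu.1) μ)
    _ = ((t / 2) ^ (μ + 1) - s ^ (μ + 1)) / (μ + 1) * (2 ^ |ν| * t ^ ν) := by
        rw [intervalIntegral.integral_mul_const, integral_rpow (Or.inl hμ)]
    _ ≤ t ^ (μ + 1) / (μ + 1) * (2 ^ |ν| * t ^ ν) := by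
        have h1 : (t / 2) ^ (μ + 1) ≤ t ^ (μ + 1) :=
          Real.rpow_le_rpow (by linarith) (by linarith) (by linarith)
        have h2 : 0 ≤ s ^ (μ + 1) := Real.rpow_nonneg hs _
        have h3 : (0:ℝ) ≤ 2 ^ |ν| * t ^ ν := by positivity
        apply mul_le_mul_of_nonneg_right _ h3
        rw [div_le_div_iff_of_pos_right hμ1]
        linarith
    _ = 2 ^ |ν| * t ^ ν * (t ^ (μ + 1) / (μ + 1)) := by ring

theorem stmt_0 (T μ ν : ℝ) (hT : 0 < T) (hμ : -1 < μ) (hν : -1 < ν) :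
    ∃ C : ℝ, 0 < C ∧ ∀ s t : ℝ, 0 ≤ s → s < t → t ≤ T →
      (∫ u in s..t, u ^ μ * (t - u) ^ ν) ≤ C * t ^ μ * (t - s) ^ (ν + 1) := by
  have hν1' : (0:ℝ) < ν + 1 := by linarith
  have hμ1' : (0:ℝ) < μ + 1 := by linarith
  refine ⟨2 ^ |μ| / (ν + 1) + 2 ^ |ν| * 2 ^ (ν + 1) / (μ + 1),
    add_pos (div_pos (Real.rpow_pos_of_pos two_pos _) hν1')
      (div_pos (mul_pos (Real.rpow_pos_of_pos two_pos _)
        (Real.rpow_pos_of_pos two_pos _)) hμ1'), ?_⟩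
  intro s t hs hst htT
  have ht : 0 < t := lt_of_le_of_lt hs hst
  have hν1 : (0:ℝ) < ν + 1 := by linarith
  have hμ1 : (0:ℝ) < μ + 1 := by linarith
  have hts : (0:ℝ) ≤ (t - s) ^ (ν + 1) := Real.rpow_nonneg (by linarith) _
  rcases le_or_gt s (t / 2) with h | h
  · have hsplit : (∫ u in s..t, u ^ μ * (t - u) ^ ν) =
        (∫ u in s..(t / 2), u ^ μ * (t - u) ^ ν) +
          ∫ u in (t / 2)..t, u ^ μ * (t - u) ^ ν :=
      (intervalIntegral.integral_add_adjacent_intervals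
        (integ_left μ ν t s hμ ht hs h)
        (integ_right μ ν t (t / 2) hν ht le_rfl (by linarith))).symm
    have A := piece_left μ ν t s hμ ht hs h
    have B := piece_right μ ν t (t / 2) hν ht le_rfl (by linarith)
    have hA1 : t ^ ν * t ^ (μ + 1) = t ^ μ * t ^ (ν + 1) := by
      rw [← Real.rpow_add ht, ← Real.rpow_add ht]; ring_nf
    have hA2 : t ^ (ν + 1) ≤ 2 ^ (ν + 1) * (t - s) ^ (ν + 1) := by
      calc t ^ (ν + 1) ≤ (2 * (t - s)) ^ (ν + 1) :=
            Real.rpow_le_rpow ht.le (by linarith) (by linarith)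
        _ = 2 ^ (ν + 1) * (t - s) ^ (ν + 1) := Real.mul_rpow (by norm_num) (by linarith)
    have hA' : 2 ^ |ν| * t ^ ν * (t ^ (μ + 1) / (μ + 1)) ≤
        2 ^ |ν| * 2 ^ (ν + 1) / (μ + 1) * t ^ μ * (t - s) ^ (ν + 1) := by
      have e1 : 2 ^ |ν| * t ^ ν * (t ^ (μ + 1) / (μ + 1)) =
          2 ^ |ν| / (μ + 1) * (t ^ ν * t ^ (μ + 1)) := by ring
      rw [e1, hA1]
      calc 2 ^ |ν| / (μ + 1) * (t ^ μ * t ^ (ν + 1))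
          ≤ 2 ^ |ν| / (μ + 1) * (t ^ μ * (2 ^ (ν + 1) * (t - s) ^ (ν + 1))) := by
            gcongr
        _ = 2 ^ |ν| * 2 ^ (ν + 1) / (μ + 1) * t ^ μ * (t - s) ^ (ν + 1) := by ring
    have hB' : 2 ^ |μ| * t ^ μ * ((t - t / 2) ^ (ν + 1) / (ν + 1)) ≤
        2 ^ |μ| / (ν + 1) * t ^ μ * (t - s) ^ (ν + 1) := by
      have h2 : (t - t / 2) ^ (ν + 1) ≤ (t - s) ^ (ν + 1) :=
        Real.rpow_le_rpow (by linarith) (by linarith) (by linarith)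
      calc 2 ^ |μ| * t ^ μ * ((t - t / 2) ^ (ν + 1) / (ν + 1))
          ≤ 2 ^ |μ| * t ^ μ * ((t - s) ^ (ν + 1) / (ν + 1)) := by gcongr
        _ = 2 ^ |μ| / (ν + 1) * t ^ μ * (t - s) ^ (ν + 1) := by ring
    rw [hsplit]
    calc (∫ u in s..(t / 2), u ^ μ * (t - u) ^ ν) +
          ∫ u in (t / 2)..t, u ^ μ * (t - u) ^ ν
        ≤ 2 ^ |ν| * t ^ ν * (t ^ (μ + 1) / (μ + 1)) +
            2 ^ |μ| * t ^ μ * ((t - t / 2) ^ (ν + 1) / (ν + 1)) := add_le_add A B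
      _ ≤ 2 ^ |ν| * 2 ^ (ν + 1) / (μ + 1) * t ^ μ * (t - s) ^ (ν + 1) +
            2 ^ |μ| / (ν + 1) * t ^ μ * (t - s) ^ (ν + 1) := add_le_add hA' hB'
      _ = (2 ^ |μ| / (ν + 1) + 2 ^ |ν| * 2 ^ (ν + 1) / (μ + 1)) * t ^ μ *
            (t - s) ^ (ν + 1) := by ring
  · have B := piece_right μ ν t s hν ht h.le hst.le
    have hx : (0:ℝ) ≤ 2 ^ |ν| * 2 ^ (ν + 1) / (μ + 1) * t ^ μ * (t - s) ^ (ν + 1) :=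
      mul_nonneg (by positivity) hts
    calc (∫ u in s..t, u ^ μ * (t - u) ^ ν)
        ≤ 2 ^ |μ| * t ^ μ * ((t - s) ^ (ν + 1) / (ν + 1)) := B
      _ = 2 ^ |μ| / (ν + 1) * t ^ μ * (t - s) ^ (ν + 1) := by ring
      _ ≤ 2 ^ |μ| / (ν + 1) * t ^ μ * (t - s) ^ (ν + 1) +
            2 ^ |ν| * 2 ^ (ν + 1) / (μ + 1) * t ^ μ * (t - s) ^ (ν + 1) :=
          le_add_of_nonneg_right hx
      _ = (2 ^ |μ| / (ν + 1) + 2 ^ |ν| * 2 ^ (ν + 1) / (μ + 1)) * t ^ μ *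
            (t - s) ^ (ν + 1) := by ring
end

section
/- Assume g : {(t,u) : 0 < u < t ≤ T} → ℝ satisfies |g(t,u)| ≤ C t^α u^β (t-u)^γ for all 0 < u < t ≤ T, with p ≥ 1, α ∈ ℝ, β > -1/p, γ > -1/p. Define κ = α + β + γ if α + β < 0, and κ = γ if α + β ≥ 0. Then there exists a constant C' > 0 (depending on α, β, γ, p, T) such that for all 0 ≤ s < t ≤ T, ∫_s^t |g(t,u)|^p du ≤ C' (t-s)^{κ p + 1}. -/
open MeasureTheory intervalIntegral

lemma aux1 {a s t : ℝ} (ha : -1 < a) (hs : 0 ≤ s) (hst : s ≤ t) (ht : 0 < t) :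
    ∫ u in s..t, u ^ a ≤ max 1 (1/(a+1)) * (t ^ a * (t - s)) := by
  have ha1 : 0 < a + 1 := by linarith
  rcases le_or_gt 0 a with h | h
  · calc ∫ u in s..t, u ^ a ≤ ∫ _ in s..t, t ^ a := by
          apply intervalIntegral.integral_mono_on hst (intervalIntegrable_rpow' ha)
            intervalIntegrable_const
          intro u hu
          exact Real.rpow_le_rpow (hs.trans hu.1) hu.2 h
    _ = t ^ a * (t - s) := by simp [mul_comm]
    _ ≤ max 1 (1/(a+1)) * (t ^ a * (t - s)) := by
          apply le_mul_of_one_le_left _ (le_max_left _ _)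
          have : 0 ≤ t ^ a := Real.rpow_nonneg ht.le a
          nlinarith
  · rw [integral_rpow (Or.inl ha)]
    have hts : t ^ a * s ≤ s ^ (a+1) := by
      rcases eq_or_lt_of_le hs with hs0 | hs'
      · rw [← hs0, Real.zero_rpow (by linarith : a + 1 ≠ 0)]; simp
      · have h1 : t ^ a ≤ s ^ a := Real.rpow_le_rpow_of_nonpos hs' hst h.le
        have h2 : s ^ (a+1) = s ^ a * s := Real.rpow_add_one hs'.ne' a
        nlinarith
    have ht1 : t ^ (a+1) = t ^ a * t := Real.rpow_add_one ht.ne' a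
    have key : t ^ (a+1) - s ^ (a+1) ≤ t ^ a * (t - s) := by nlinarith
    calc (t ^ (a+1) - s ^ (a+1)) / (a+1) ≤ (t ^ a * (t - s)) / (a+1) := by
          apply div_le_div_of_nonneg_right key ha1.le
    _ = (1/(a+1)) * (t ^ a * (t-s)) := by ring
    _ ≤ max 1 (1/(a+1)) * (t ^ a * (t-s)) := by
          apply mul_le_mul_of_nonneg_right (le_max_right _ _)
          have h3 : 0 ≤ t ^ a := Real.rpow_nonneg ht.le a
          nlinarith

lemma aux2 {b s t : ℝ} (hb : -1 < b) :
    ∫ u in s..t, (t - u) ^ b = (t-s) ^ (b+1) / (b+1) := by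
  rw [intervalIntegral.integral_comp_sub_left (fun x => x ^ b) t, sub_self,
    integral_rpow (Or.inl hb), Real.zero_rpow (by linarith : b + 1 ≠ 0), sub_zero]

lemma aux3 {b s t : ℝ} (hb : -1 < b) : IntervalIntegrable (fun u => (t - u) ^ b) volume s t := by
  have := (intervalIntegrable_rpow' hb (a := t - s) (b := t - t)).comp_sub_left t
  simpa using this

set_option maxHeartbeats 1000000 in
theorem stmt_1 (T p α β γ C : ℝ) (hT : 0 < T) (hp : 1 ≤ p) (hC : 0 < C)
    (hβ : -1/p < β) (hγ : -1/p < γ) (g : ℝ → ℝ → ℝ)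
    (hg : ∀ t u : ℝ, 0 < u → u < t → t ≤ T →
      |g t u| ≤ C * t ^ α * u ^ β * (t - u) ^ γ)
    (κ : ℝ) (hκ : κ = if α + β < 0 then α + β + γ else γ) :
    ∃ C' : ℝ, 0 < C' ∧ ∀ s t : ℝ, 0 ≤ s → s < t → t ≤ T →
      (∫ u in s..t, |g t u| ^ p) ≤ C' * (t - s) ^ (κ * p + 1) := by
  have hp0 : 0 < p := lt_of_lt_of_le one_pos hp
  have ha : -1 < β * p := by
    have := (div_lt_iff₀ hp0).mp hβ; linarith
  have hb : -1 < γ * p := by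
    have := (div_lt_iff₀ hp0).mp hγ; linarith
  set ca : ℝ := max 1 ((2:ℝ) ^ (-(β*p))) with hca
  set cb : ℝ := max 1 ((2:ℝ) ^ (-(γ*p))) with hcb
  set ca' : ℝ := max 1 (1/(β*p+1)) with hca'
  set K : ℝ := cb * ca' + ca * (1/(γ*p+1)) with hK
  set M : ℝ := if α + β < 0 then 1 else T ^ ((α+β)*p) with hM
  have hca0 : 0 < ca := lt_of_lt_of_le one_pos (le_max_left _ _)
  have hcb0 : 0 < cb := lt_of_lt_of_le one_pos (le_max_left _ _)
  have hca'0 : 0 < ca' := lt_of_lt_of_le one_pos (le_max_left _ _)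
  have hK0 : 0 < K := by
    have h1 : 0 < 1/(γ*p+1) := one_div_pos.mpr (by linarith)
    have h2 : 0 < cb * ca' := mul_pos hcb0 hca'0
    have h3 : 0 < ca * (1/(γ*p+1)) := mul_pos hca0 h1
    rw [hK]; linarith
  have hM0 : 0 < M := by
    rw [hM]; split
    · exact one_pos
    · exact Real.rpow_pos_of_pos hT _
  refine ⟨C ^ p * K * M, mul_pos (mul_pos (Real.rpow_pos_of_pos hC p) hK0) hM0, fun s t hs hst htT => ?_⟩
  have ht0 : 0 < t := lt_of_le_of_lt hs hst
  have hδ : 0 < t - s := by linarith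
  -- the dominating function
  set D : ℝ → ℝ := fun u => (C ^ p * t ^ (α*p)) *
    (cb * (t-s) ^ (γ*p) * u ^ (β*p) + ca * t ^ (β*p) * (t - u) ^ (γ*p)) with hD
  have hDint : IntervalIntegrable D volume s t := by
    apply IntervalIntegrable.const_mul
    exact ((intervalIntegrable_rpow' ha).const_mul _).add ((aux3 hb).const_mul _)
  have hmono : (∫ u in s..t, |g t u| ^ p) ≤ ∫ u in s..t, D u := by
    rw [intervalIntegral.integral_of_le hst.le, intervalIntegral.integral_of_le hst.le]
    apply integral_mono_of_nonneg
    · exact Filter.Eventually.of_forall fun u => Real.rpow_nonneg (abs_nonneg _) _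
    · exact hDint.1
    · have h1 : ∀ᵐ u : ℝ ∂volume, u ≠ t := by
        rw [ae_iff]
        have hset : {u : ℝ | ¬u ≠ t} = {t} := by ext u; simp
        rw [hset]
        exact measure_singleton t
      filter_upwards [ae_restrict_mem measurableSet_Ioc, ae_restrict_of_ae h1] with u hu hut
      have hult : u < t := lt_of_le_of_ne hu.2 hut
      have hsu : s < u := hu.1
      have hu0 : 0 < u := lt_of_le_of_lt hs hsu
      have htu0 : 0 ≤ t - u := by linarith
      have e2 : |g t u| ^ p ≤ (C * t ^ α * u ^ β * (t-u) ^ γ) ^ p :=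
        Real.rpow_le_rpow (abs_nonneg _) (hg t u hu0 hult htT) hp0.le
      have e3 : (C * t ^ α * u ^ β * (t-u) ^ γ) ^ p
          = C ^ p * t ^ (α*p) * u ^ (β*p) * (t-u) ^ (γ*p) := by
        rw [Real.mul_rpow (by positivity) (Real.rpow_nonneg htu0 _),
          Real.mul_rpow (by positivity) (Real.rpow_nonneg hu0.le _),
          Real.mul_rpow hC.le (Real.rpow_nonneg ht0.le _),
          ← Real.rpow_mul ht0.le, ← Real.rpow_mul hu0.le, ← Real.rpow_mul htu0]
      -- core pointwise inequality
      have core : u ^ (β*p) * (t-u) ^ (γ*p)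
          ≤ cb * (t-s) ^ (γ*p) * u ^ (β*p) + ca * t ^ (β*p) * (t - u) ^ (γ*p) := by
        have hq2 : (0:ℝ) ≤ ca * t ^ (β*p) * (t-u) ^ (γ*p) := by positivity
        have hq1 : (0:ℝ) ≤ cb * (t-s) ^ (γ*p) * u ^ (β*p) := by positivity
        rcases le_or_gt u ((s+t)/2) with hm | hm
        · have h2 : (t-s)/2 ≤ t - u := by linarith
          have h3 : t - u ≤ t - s := by linarith
          have hb1 : (t-u) ^ (γ*p) ≤ cb * (t-s) ^ (γ*p) := by
            rcases le_or_gt 0 (γ*p) with hb' | hb'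
            · calc (t-u) ^ (γ*p) ≤ (t-s) ^ (γ*p) := Real.rpow_le_rpow htu0 h3 hb'
              _ ≤ cb * (t-s) ^ (γ*p) :=
                  le_mul_of_one_le_left (Real.rpow_nonneg hδ.le _) (le_max_left _ _)
            · have h4 : (t-u) ^ (γ*p) ≤ ((t-s)/2) ^ (γ*p) :=
                Real.rpow_le_rpow_of_nonpos (by linarith) h2 hb'.le
              have h5 : ((t-s)/2) ^ (γ*p) = (2:ℝ) ^ (-(γ*p)) * (t-s) ^ (γ*p) := by
                rw [Real.rpow_neg (by norm_num : (0:ℝ) ≤ 2), div_eq_mul_inv,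
                  Real.mul_rpow hδ.le (by norm_num), Real.inv_rpow (by norm_num)]
                ring
              calc (t-u) ^ (γ*p) ≤ (2:ℝ) ^ (-(γ*p)) * (t-s) ^ (γ*p) := by rw [← h5]; exact h4
              _ ≤ cb * (t-s) ^ (γ*p) :=
                  mul_le_mul_of_nonneg_right (le_max_right _ _) (Real.rpow_nonneg hδ.le _)
          have := mul_le_mul_of_nonneg_left hb1 (Real.rpow_nonneg hu0.le (β*p))
          nlinarith
        · have h4 : t/2 ≤ u := by linarith
          have ha1 : u ^ (β*p) ≤ ca * t ^ (β*p) := by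
            rcases le_or_gt 0 (β*p) with ha' | ha'
            · calc u ^ (β*p) ≤ t ^ (β*p) := Real.rpow_le_rpow hu0.le hult.le ha'
              _ ≤ ca * t ^ (β*p) :=
                  le_mul_of_one_le_left (Real.rpow_nonneg ht0.le _) (le_max_left _ _)
            · have h5 : u ^ (β*p) ≤ (t/2) ^ (β*p) :=
                Real.rpow_le_rpow_of_nonpos (by linarith) h4 ha'.le
              have h6 : (t/2) ^ (β*p) = (2:ℝ) ^ (-(β*p)) * t ^ (β*p) := by
                rw [Real.rpow_neg (by norm_num : (0:ℝ) ≤ 2), div_eq_mul_inv,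
                  Real.mul_rpow ht0.le (by norm_num), Real.inv_rpow (by norm_num)]
                ring
              calc u ^ (β*p) ≤ (2:ℝ) ^ (-(β*p)) * t ^ (β*p) := by rw [← h6]; exact h5
              _ ≤ ca * t ^ (β*p) :=
                  mul_le_mul_of_nonneg_right (le_max_right _ _) (Real.rpow_nonneg ht0.le _)
          have := mul_le_mul_of_nonneg_right ha1 (Real.rpow_nonneg htu0 (γ*p))
          nlinarith
      calc |g t u| ^ p ≤ C ^ p * t ^ (α*p) * u ^ (β*p) * (t-u) ^ (γ*p) := e3 ▸ e2
      _ = (C ^ p * t ^ (α*p)) * (u ^ (β*p) * (t-u) ^ (γ*p)) := by ring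
      _ ≤ D u := by
          rw [hD]
          exact mul_le_mul_of_nonneg_left core (by positivity)
  -- compute the integral of D
  have hDval : (∫ u in s..t, D u)
      ≤ C ^ p * K * (t ^ ((α+β)*p) * (t-s) ^ (γ*p+1)) := by
    have expand : (∫ u in s..t, D u) = (C ^ p * t ^ (α*p)) *
        (cb * (t-s) ^ (γ*p) * ∫ u in s..t, u ^ (β*p))
        + (C ^ p * t ^ (α*p)) * (ca * t ^ (β*p) * ∫ u in s..t, (t-u) ^ (γ*p)) := by
      rw [hD]
      rw [intervalIntegral.integral_const_mul]
      rw [intervalIntegral.integral_add ((intervalIntegrable_rpow' ha).const_mul _)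
        ((aux3 hb).const_mul _)]
      rw [intervalIntegral.integral_const_mul, intervalIntegral.integral_const_mul]
      ring
    rw [expand]
    have i1 : (∫ u in s..t, u ^ (β*p)) ≤ ca' * (t ^ (β*p) * (t-s)) :=
      aux1 ha hs hst.le ht0
    have i2 : (∫ u in s..t, (t-u) ^ (γ*p)) = (t-s) ^ (γ*p+1) / (γ*p+1) := aux2 hb
    have e1 : 0 ≤ C ^ p * t ^ (α*p) := by positivity
    have step1 : (C ^ p * t ^ (α*p)) * (cb * (t-s) ^ (γ*p) * ∫ u in s..t, u ^ (β*p))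
        ≤ (C ^ p * t ^ (α*p)) * (cb * (t-s) ^ (γ*p) * (ca' * (t ^ (β*p) * (t-s)))) := by
      apply mul_le_mul_of_nonneg_left _ e1
      apply mul_le_mul_of_nonneg_left i1 (by positivity)
    have key1 : (t-s) ^ (γ*p) * (t - s) = (t-s) ^ (γ*p+1) := by
      rw [Real.rpow_add_one hδ.ne' (γ*p)]
    have key2 : t ^ (α*p) * t ^ (β*p) = t ^ ((α+β)*p) := by
      rw [← Real.rpow_add ht0 (α*p) (β*p)]; ring_nf
    have hB : (0:ℝ) < γ*p+1 := by linarith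
    calc _ ≤ (C ^ p * t ^ (α*p)) * (cb * (t-s) ^ (γ*p) * (ca' * (t ^ (β*p) * (t-s))))
        + (C ^ p * t ^ (α*p)) * (ca * t ^ (β*p) * (((t-s) ^ (γ*p) * (t-s)) / (γ*p+1))) := by
          rw [i2, ← key1]; linarith
    _ = C ^ p * K * ((t ^ (α*p) * t ^ (β*p)) * ((t-s) ^ (γ*p) * (t-s))) := by
          rw [hK]
          field_simp
    _ = C ^ p * K * (t ^ ((α+β)*p) * (t-s) ^ (γ*p+1)) := by rw [key1, key2]
  -- final exponent bookkeeping
  have final : C ^ p * K * (t ^ ((α+β)*p) * (t-s) ^ (γ*p+1))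
      ≤ C ^ p * K * M * (t-s) ^ (κ*p+1) := by
    rcases lt_or_ge (α+β) 0 with hcase | hcase
    · have hκ' : κ = α + β + γ := by rw [hκ, if_pos hcase]
      have hM' : M = 1 := by rw [hM, if_pos hcase]
      have hexp : (α+β)*p < 0 := mul_neg_of_neg_of_pos hcase hp0
      have h1 : t ^ ((α+β)*p) ≤ (t-s) ^ ((α+β)*p) :=
        Real.rpow_le_rpow_of_nonpos hδ (by linarith) hexp.le
      have h2 : (t-s) ^ ((α+β)*p) * (t-s) ^ (γ*p+1) = (t-s) ^ (κ*p+1) := by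
        rw [← Real.rpow_add hδ, hκ']; ring_nf
      calc C ^ p * K * (t ^ ((α+β)*p) * (t-s) ^ (γ*p+1))
          ≤ C ^ p * K * ((t-s) ^ ((α+β)*p) * (t-s) ^ (γ*p+1)) := by
            apply mul_le_mul_of_nonneg_left _ (by positivity)
            exact mul_le_mul_of_nonneg_right h1 (Real.rpow_nonneg hδ.le _)
      _ = C ^ p * K * M * (t-s) ^ (κ*p+1) := by rw [h2, hM']; ring
    · have hκ' : κ = γ := by rw [hκ, if_neg (not_lt.mpr hcase)]
      have hM' : M = T ^ ((α+β)*p) := by rw [hM, if_neg (not_lt.mpr hcase)]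
      have h1 : t ^ ((α+β)*p) ≤ T ^ ((α+β)*p) :=
        Real.rpow_le_rpow ht0.le htT (mul_nonneg hcase hp0.le)
      calc C ^ p * K * (t ^ ((α+β)*p) * (t-s) ^ (γ*p+1))
          ≤ C ^ p * K * (T ^ ((α+β)*p) * (t-s) ^ (γ*p+1)) := by
            apply mul_le_mul_of_nonneg_left _ (by positivity)
            exact mul_le_mul_of_nonneg_right h1 (Real.rpow_nonneg hδ.le _)
      _ = C ^ p * K * M * (t-s) ^ (κ*p+1) := by rw [hM', hκ']; ring
  linarith
end

section
/- Let H ∈ (1/2, 1), K(t,s) = C s^{1/2-H} ∫_s^t u^{H-1/2} (u-s)^{H-3/2} du, and fix ε ∈ (0, 1-H). Then there exists a constant C' > 0 such that for all 0 < u < s < t ≤ T, |K(t,u) - K(s,u)| ≤ C' (t-s)^{H-ε} ( u^{1/2-H} (s-u)^{H+ε-1} + (s-u)^{ε-1/2} ). -/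
open MeasureTheory intervalIntegral

private lemma aux_add_rpow_le {x y p : ℝ} (hx : 0 ≤ x) (hy : 0 ≤ y) (hp0 : 0 ≤ p)
    (hp1 : p ≤ 1) : (x + y) ^ p ≤ x ^ p + y ^ p := by
  lift x to NNReal using hx
  lift y to NNReal using hy
  rw [← NNReal.coe_add, ← NNReal.coe_rpow, ← NNReal.coe_rpow, ← NNReal.coe_rpow,
    ← NNReal.coe_add, NNReal.coe_le_coe]
  exact NNReal.rpow_add_le_add_rpow x y hp0 hp1

theorem stmt_3 (T C H ε : ℝ) (hT : 0 < T) (hC : 0 < C)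
    (hH : H ∈ Set.Ioo (1/2 : ℝ) 1) (hε : ε ∈ Set.Ioo (0 : ℝ) (1 - H))
    (K : ℝ → ℝ → ℝ)
    (hK : ∀ t s : ℝ, 0 < s → s < t → t ≤ T →
      K t s = C * s ^ (1/2 - H) * ∫ u in s..t, u ^ (H - 1/2) * (u - s) ^ (H - 3/2)) :
    ∃ C' : ℝ, 0 < C' ∧ ∀ u s t : ℝ, 0 < u → u < s → s < t → t ≤ T →
      |K t u - K s u| ≤ C' * (t - s) ^ (H - ε) *
        (u ^ (1/2 - H) * (s - u) ^ (H + ε - 1) + (s - u) ^ (ε - 1/2)) := by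
  obtain ⟨hH1, hH2⟩ := hH
  obtain ⟨hε1, hε2⟩ := hε
  have hHε : 0 < H - ε := by linarith
  refine ⟨C / (H - ε), div_pos hC hHε, ?_⟩
  intro u s t hu hus hst htT
  have hut : u < t := hus.trans hst
  have hsT : s ≤ T := (hst.trans_le htT).le
  have hs : 0 < s := hu.trans hus
  have hsu : 0 < s - u := by linarith
  have hts : 0 < t - s := by linarith
  set f : ℝ → ℝ := fun v => v ^ (H - 1/2) * (v - u) ^ (H - 3/2) with hfdef
  -- integrability of f on intervals starting at u
  have hbase : ∀ b : ℝ, IntervalIntegrable (fun v => (v - u) ^ (H - 3/2)) volume u b := by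
    intro b
    have h := (intervalIntegrable_rpow' (a := 0) (b := b - u)
      (by linarith : (-1:ℝ) < H - 3/2)).comp_sub_right u
    simpa using h
  have hcont : ∀ b : ℝ, ContinuousOn (fun v : ℝ => v ^ (H - 1/2)) (Set.uIcc u b) :=
    fun b => continuousOn_id.rpow_const (fun x _ => Or.inr (by linarith))
  have hfint : ∀ b : ℝ, IntervalIntegrable f volume u b := fun b =>
    (hbase b).continuousOn_mul (hcont b)
  have hfst : IntervalIntegrable f volume s t := by
    apply (hfint t).mono_set
    rw [Set.uIcc_of_le hst.le, Set.uIcc_of_le hut.le]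
    exact Set.Icc_subset_Icc (by linarith) le_rfl
  have hdiff : K t u - K s u = C * u ^ (1/2 - H) * ∫ v in s..t, f v := by
    rw [hK t u hu hut htT, hK s u hu hus hsT, ← mul_sub]
    congr 1
    exact intervalIntegral.integral_interval_sub_left (hfint t) (hfint s)
  set B : ℝ := u ^ (H - 1/2) * (s - u) ^ (ε - 1/2) + (s - u) ^ (H + ε - 1) with hBdef
  have hgint : IntervalIntegrable (fun v => B * (v - s) ^ (H - ε - 1)) volume s t := by
    have h := (intervalIntegrable_rpow' (a := 0) (b := t - s)
      (by linarith : (-1:ℝ) < H - ε - 1)).comp_sub_right s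
    have h2 : IntervalIntegrable (fun v : ℝ => (v - s) ^ (H - ε - 1)) volume s t := by
      simpa using h
    simpa using h2.const_mul B
  -- pointwise bound on Ioc s t
  have hptwise : ∀ x ∈ Set.Ioc s t, f x ≤ B * (x - s) ^ (H - ε - 1) := by
    intro x hx
    obtain ⟨hsx, hxt⟩ := hx
    have hxu : 0 < x - u := by linarith
    have hxs : 0 < x - s := by linarith
    have hx0 : 0 < x := by linarith
    have h1 : x ^ (H - 1/2) ≤ u ^ (H - 1/2) + (x - u) ^ (H - 1/2) := by
      have h := aux_add_rpow_le (x := u) (y := x - u) (p := H - 1/2) hu.le hxu.le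
        (by linarith) (by linarith)
      have e : u + (x - u) = x := by ring
      rwa [e] at h
    have h2 : (x - u) ^ (H - 3/2) ≤ (s - u) ^ (ε - 1/2) * (x - s) ^ (H - ε - 1) := by
      have e : (x - u) ^ (H - 3/2) = (x - u) ^ (ε - 1/2) * (x - u) ^ (H - ε - 1) := by
        rw [← Real.rpow_add hxu]; ring_nf
      rw [e]
      exact mul_le_mul (Real.rpow_le_rpow_of_nonpos hsu (by linarith) (by linarith))
        (Real.rpow_le_rpow_of_nonpos hxs (by linarith) (by linarith))
        (Real.rpow_nonneg hxu.le _) (Real.rpow_nonneg hsu.le _)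
    have h3 : (x - u) ^ (H - 1/2) * (x - u) ^ (H - 3/2)
        ≤ (s - u) ^ (H + ε - 1) * (x - s) ^ (H - ε - 1) := by
      rw [← Real.rpow_add hxu, show H - 1/2 + (H - 3/2) = (H + ε - 1) + (H - ε - 1) by ring,
        Real.rpow_add hxu]
      exact mul_le_mul (Real.rpow_le_rpow_of_nonpos hsu (by linarith) (by linarith))
        (Real.rpow_le_rpow_of_nonpos hxs (by linarith) (by linarith))
        (Real.rpow_nonneg hxu.le _) (Real.rpow_nonneg hsu.le _)
    calc f x = x ^ (H - 1/2) * (x - u) ^ (H - 3/2) := rfl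
      _ ≤ (u ^ (H - 1/2) + (x - u) ^ (H - 1/2)) * (x - u) ^ (H - 3/2) :=
          mul_le_mul_of_nonneg_right h1 (Real.rpow_nonneg hxu.le _)
      _ = u ^ (H - 1/2) * (x - u) ^ (H - 3/2)
            + (x - u) ^ (H - 1/2) * (x - u) ^ (H - 3/2) := by ring
      _ ≤ u ^ (H - 1/2) * ((s - u) ^ (ε - 1/2) * (x - s) ^ (H - ε - 1))
            + (s - u) ^ (H + ε - 1) * (x - s) ^ (H - ε - 1) :=
          add_le_add (mul_le_mul_of_nonneg_left h2 (Real.rpow_nonneg hu.le _)) h3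
      _ = B * (x - s) ^ (H - ε - 1) := by rw [hBdef]; ring
  have hmono : (∫ v in s..t, f v) ≤ ∫ v in s..t, B * (v - s) ^ (H - ε - 1) := by
    apply intervalIntegral.integral_mono_ae_restrict hst.le hfst hgint
    rw [Filter.EventuallyLE, ae_restrict_iff' measurableSet_Icc]
    have hne : ∀ᵐ x : ℝ ∂volume, x ≠ s := by
      rw [ae_iff]
      have : {x : ℝ | ¬ x ≠ s} = {s} := by ext y; simp
      rw [this]
      exact measure_singleton s
    filter_upwards [hne] with x hxs hmem
    exact hptwise x ⟨lt_of_le_of_ne hmem.1 (Ne.symm hxs), hmem.2⟩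
  have hval : (∫ v in s..t, (v - s) ^ (H - ε - 1)) = (t - s) ^ (H - ε) / (H - ε) := by
    rw [intervalIntegral.integral_comp_sub_right (fun x => x ^ (H - ε - 1)) s, sub_self,
      integral_rpow (Or.inl (by linarith : (-1:ℝ) < H - ε - 1)),
      Real.zero_rpow (by linarith : H - ε - 1 + 1 ≠ 0),
      show H - ε - 1 + 1 = H - ε by ring, sub_zero]
  have hfnn : 0 ≤ ∫ v in s..t, f v := by
    apply intervalIntegral.integral_nonneg hst.le
    intro x hx
    exact mul_nonneg (Real.rpow_nonneg (by linarith [hx.1]) _)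
      (Real.rpow_nonneg (by linarith [hx.1]) _)
  have huinv : u ^ (1/2 - H) * u ^ (H - 1/2) = 1 := by
    rw [← Real.rpow_add hu, show 1/2 - H + (H - 1/2) = 0 by ring, Real.rpow_zero]
  have hup : 0 ≤ u ^ (1/2 - H) := Real.rpow_nonneg hu.le _
  rw [hdiff, abs_of_nonneg (mul_nonneg (mul_nonneg hC.le hup) hfnn)]
  calc C * u ^ (1/2 - H) * ∫ v in s..t, f v
      ≤ C * u ^ (1/2 - H) * ∫ v in s..t, B * (v - s) ^ (H - ε - 1) :=
        mul_le_mul_of_nonneg_left hmono (mul_nonneg hC.le hup)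
    _ = C * u ^ (1/2 - H) * (B * ((t - s) ^ (H - ε) / (H - ε))) := by
        rw [intervalIntegral.integral_const_mul, hval]
    _ = C / (H - ε) * (t - s) ^ (H - ε) * (u ^ (1/2 - H) * B) := by
        field_simp
    _ = C / (H - ε) * (t - s) ^ (H - ε) *
          (u ^ (1/2 - H) * (s - u) ^ (H + ε - 1) + (s - u) ^ (ε - 1/2)) := by
        rw [hBdef]
        congr 1
        rw [mul_add, ← mul_assoc, huinv, one_mul, add_comm]
end

section
/- Let H ∈ (0, 1/2), let T > 0, and fix ε ∈ (0, 1/2). Then there exists C > 0 such that for all 0 < u < s < t ≤ T, u^{1/2-H} (t-u)^{H-1/2} |t^{H-1/2} - s^{H-1/2}| ≤ C u^{1/2-H} s^{H-1+ε} (t-s)^{H-ε}. -/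
open Real

/-
Write p = H - 1/2 ∈ (-1/2, 0) and b = 1/2 - ε ∈ (0, 1/2). Since t - u ≥ t - s, the factor
(t - u)^p is at most (t - s)^p, and it remains to show s^p - t^p ≤ s^(p-b) (t - s)^b. Scaling by s
reduces this to 1 - (1 + x)^p ≤ x^b for x = (t - s)/s ≥ 0, and the left side is at most
1 - (1 + x)⁻¹ ≤ min(x, 1) ≤ x^b. So C = 1 works.
-/

lemma one_sub_one_add_rpow_le_rpow {p b x : ℝ} (hp : -1 ≤ p) (hb₀ : 0 ≤ b) (hb₁ : b ≤ 1)
    (hx : 0 ≤ x) : 1 - (1 + x) ^ p ≤ x ^ b := by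
  rcases le_total x 1 with hx₁ | hx₁
  · have hinv : (1 + x)⁻¹ ≤ (1 + x) ^ p := by
      rw [← rpow_neg_one]
      exact rpow_le_rpow_of_exponent_le (by linarith) hp
    have hinv_ge : 1 - x ≤ (1 + x)⁻¹ := by
      rw [← one_div, le_div_iff₀ (by linarith)]
      nlinarith
    calc 1 - (1 + x) ^ p ≤ x := by linarith
      _ = x ^ (1 : ℝ) := (rpow_one x).symm
      _ ≤ x ^ b := rpow_le_rpow_of_exponent_ge' hx hx₁ hb₀ hb₁
  · calc 1 - (1 + x) ^ p ≤ 1 := by linarith [rpow_nonneg (by linarith : (0 : ℝ) ≤ 1 + x) p]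
      _ ≤ x ^ b := one_le_rpow hx₁ hb₀

lemma rpow_sub_rpow_le_rpow_mul_rpow {p b s t : ℝ} (hp : -1 ≤ p) (hb₀ : 0 ≤ b) (hb₁ : b ≤ 1)
    (hs : 0 < s) (hst : s ≤ t) : s ^ p - t ^ p ≤ s ^ (p - b) * (t - s) ^ b := by
  set x := (t - s) / s with hx_def
  have hx : 0 ≤ x := div_nonneg (by linarith) hs.le
  have ht : t = s * (1 + x) := by
    rw [hx_def]
    field_simp
    ring
  have hrhs : s ^ (p - b) * (t - s) ^ b = s ^ p * x ^ b := by
    rw [hx_def, div_rpow (by linarith) hs.le, rpow_sub hs]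
    ring
  rw [hrhs, ht, mul_rpow hs.le (by linarith), ← mul_one_sub]
  exact mul_le_mul_of_nonneg_left (one_sub_one_add_rpow_le_rpow hp hb₀ hb₁ hx)
    (rpow_nonneg hs.le p)

theorem stmt_5_general (H T ε : ℝ) (hH : H ∈ Set.Ioo (0 : ℝ) (1/2))
    (hε : ε ∈ Set.Ioo (0 : ℝ) (1/2)) :
    ∃ C : ℝ, 0 < C ∧ ∀ u s t : ℝ, 0 < u → u < s → s < t → t ≤ T →
      u ^ (1/2 - H) * (t - u) ^ (H - 1/2) * |t ^ (H - 1/2) - s ^ (H - 1/2)| ≤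
        C * u ^ (1/2 - H) * s ^ (H - 1 + ε) * (t - s) ^ (H - ε) := by
  obtain ⟨hH₀, hH₁⟩ := hH
  obtain ⟨hε₀, hε₁⟩ := hε
  refine ⟨1, one_pos, fun u s t hu hus hst _ => ?_⟩
  have hs : 0 < s := hu.trans hus
  have hts : 0 < t - s := sub_pos.2 hst
  have hmono : t ^ (H - 1/2) ≤ s ^ (H - 1/2) := rpow_le_rpow_of_nonpos hs hst.le (by linarith)
  have habs : |t ^ (H - 1/2) - s ^ (H - 1/2)| = s ^ (H - 1/2) - t ^ (H - 1/2) := by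
    rw [abs_sub_comm, abs_of_nonneg (sub_nonneg.2 hmono)]
  have hdiff : s ^ (H - 1/2) - t ^ (H - 1/2) ≤ s ^ (H - 1 + ε) * (t - s) ^ (1/2 - ε) := by
    have := rpow_sub_rpow_le_rpow_mul_rpow (p := H - 1/2) (b := 1/2 - ε) (by linarith)
      (by linarith) (by linarith) hs hst.le
    rwa [show H - 1/2 - (1/2 - ε) = H - 1 + ε by ring] at this
  have hfar : (t - u) ^ (H - 1/2) ≤ (t - s) ^ (H - 1/2) :=
    rpow_le_rpow_of_nonpos hts (by linarith) (by linarith)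
  have hsplit : (t - s) ^ (H - ε) = (t - s) ^ (H - 1/2) * (t - s) ^ (1/2 - ε) := by
    rw [← rpow_add hts]
    ring_nf
  rw [habs, hsplit]
  calc u ^ (1/2 - H) * (t - u) ^ (H - 1/2) * (s ^ (H - 1/2) - t ^ (H - 1/2))
      ≤ u ^ (1/2 - H) * (t - s) ^ (H - 1/2) * (s ^ (H - 1 + ε) * (t - s) ^ (1/2 - ε)) :=
        mul_le_mul (mul_le_mul_of_nonneg_left hfar (rpow_nonneg hu.le _)) hdiff
          (sub_nonneg.2 hmono) (by positivity)
    _ = 1 * u ^ (1/2 - H) * s ^ (H - 1 + ε) * ((t - s) ^ (H - 1/2) * (t - s) ^ (1/2 - ε)) := by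
        ring

theorem stmt_5 (H T ε : ℝ) (hH : H ∈ Set.Ioo (0 : ℝ) (1/2)) (hT : 0 < T)
    (hε : ε ∈ Set.Ioo (0 : ℝ) (1/2)) :
    ∃ C : ℝ, 0 < C ∧ ∀ u s t : ℝ, 0 < u → u < s → s < t → t ≤ T →
      u ^ (1/2 - H) * (t - u) ^ (H - 1/2) * |t ^ (H - 1/2) - s ^ (H - 1/2)| ≤
        C * u ^ (1/2 - H) * s ^ (H - 1 + ε) * (t - s) ^ (H - ε) :=
  stmt_5_general H T ε hH hε
end

section
/- Let u : ℝ → ℝ be Lipschitz continuous and f : [0,T] → ℝ be in L¹([0,T]). Then the integral equation X(t) = ∫_0^t u(X(s)) ds + f(t), t ∈ [0,T], has a unique solution X ∈ L¹([0,T]). -/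
/-!
Each Picard step `X ↦ ∫₀ᵗ u(X) + f` turns a pointwise bound `|X - Y| ≤ C (Kt)ⁿ / n!` on `[0, T]`
into `C (Kt)ⁿ⁺¹ / (n+1)!`. Hence the increments of the Picard iterates are uniformly summable;
the iterates converge pointwise to a limit dominated by `|f| + const`, and dominated convergence
shows that the limit is a solution. For two solutions `X, Y`, the primitive `G` of `|Y - X|`
satisfies `G ≤ K ∫₀ᵗ G`, so the same iteration gives `G ≤ G(T) (Kt)ⁿ / n! → 0`.
-/

open MeasureTheory intervalIntegral Set Filter Topology
open scoped Nat Interval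

lemma MeasureTheory.IntegrableOn.intervalIntegrable_of_mem_Icc {g : ℝ → ℝ} {T t : ℝ}
    (hg : IntegrableOn g (Icc 0 T)) (ht : t ∈ Icc 0 T) : IntervalIntegrable g volume 0 t :=
  (hg.mono_set (uIcc_subset_Icc ⟨le_rfl, ht.1.trans ht.2⟩ ht)).intervalIntegrable

lemma uIoc_zero_subset_Icc {t T : ℝ} (ht : t ∈ Icc 0 T) : Ι 0 t ⊆ Icc 0 T := by
  rw [uIoc_of_le ht.1]
  exact Ioc_subset_Icc_self.trans (Icc_subset_Icc_right ht.2)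

lemma MeasureTheory.IntegrableOn.continuousOn_primitive_zero {g : ℝ → ℝ} {T : ℝ}
    (hg : IntegrableOn g (Icc 0 T)) : ContinuousOn (fun t => ∫ s in (0:ℝ)..t, g s) (Icc 0 T) :=
  (continuousOn_primitive hg).congr fun _ ht => integral_of_le ht.1

lemma integral_mul_mul_pow_div_factorial (K C t : ℝ) (n : ℕ) :
    ∫ s in (0:ℝ)..t, K * (C * (K * s) ^ n / n !) = C * (K * t) ^ (n + 1) / (n + 1)! := by
  have hpoly : ∀ s : ℝ, K * (C * (K * s) ^ n / n !) = (K ^ (n + 1) * C / n !) * s ^ n := by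
    intro s; rw [mul_pow]; ring
  rw [funext hpoly, intervalIntegral.integral_const_mul, integral_pow, Nat.factorial_succ]
  push_cast
  field_simp
  ring

lemma le_mul_pow_div_factorial_of_le_mul_integral {K C T : ℝ} (hK : 0 ≤ K) {ψ : ℕ → ℝ → ℝ}
    (hψ : ∀ n, IntegrableOn (ψ n) (Icc 0 T)) (h0 : ∀ t ∈ Icc 0 T, ψ 0 t ≤ C)
    (hsucc : ∀ n, ∀ t ∈ Icc 0 T, ψ (n + 1) t ≤ K * ∫ s in (0:ℝ)..t, ψ n s) (n : ℕ) :
    ∀ t ∈ Icc 0 T, ψ n t ≤ C * (K * t) ^ n / n ! := by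
  induction n with
  | zero => simpa using h0
  | succ n ih =>
    intro t ht
    have hbound : Continuous fun s : ℝ => K * (C * (K * s) ^ n / n !) := by fun_prop
    calc ψ (n + 1) t ≤ K * ∫ s in (0:ℝ)..t, ψ n s := hsucc n t ht
      _ = ∫ s in (0:ℝ)..t, K * ψ n s := (intervalIntegral.integral_const_mul _ _).symm
      _ ≤ ∫ s in (0:ℝ)..t, K * (C * (K * s) ^ n / n !) :=
        integral_mono_on ht.1 (((hψ n).intervalIntegrable_of_mem_Icc ht).const_mul K)
          (hbound.intervalIntegrable _ _)
          fun s hs => mul_le_mul_of_nonneg_left (ih s ⟨hs.1, hs.2.trans ht.2⟩) hK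
      _ = C * (K * t) ^ (n + 1) / (n + 1)! := integral_mul_mul_pow_div_factorial K C t n

lemma ae_eq_zero_of_le_mul_integral {K T : ℝ} (hK : 0 ≤ K) (hT : 0 ≤ T) {g : ℝ → ℝ}
    (hg0 : 0 ≤ g) (hg : IntegrableOn g (Icc 0 T))
    (hle : ∀ᵐ t ∂volume.restrict (Icc 0 T), g t ≤ K * ∫ s in (0:ℝ)..t, g s) :
    g =ᵐ[volume.restrict (Icc 0 T)] 0 := by
  set G : ℝ → ℝ := fun t => ∫ s in (0:ℝ)..t, g s
  have hG : IntegrableOn G (Icc 0 T) := hg.continuousOn_primitive_zero.integrableOn_Icc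
  have hGle : ∀ t ∈ Icc 0 T, G t ≤ K * ∫ s in (0:ℝ)..t, G s := by
    intro t ht
    rw [← intervalIntegral.integral_const_mul]
    exact integral_mono_ae_restrict ht.1 (hg.intervalIntegrable_of_mem_Icc ht)
      ((hG.intervalIntegrable_of_mem_Icc ht).const_mul K)
      (ae_restrict_of_ae_restrict_of_subset (Icc_subset_Icc_right ht.2) hle)
  -- The constant sequence `G` satisfies the hypotheses of the iteration with `C = G T`.
  have hGT : G T ≤ 0 := by
    have hiter := le_mul_pow_div_factorial_of_le_mul_integral hK (fun _ => hG)
      (fun t ht => integral_mono_interval le_rfl ht.1 ht.2 (ae_of_all _ hg0)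
        (hg.intervalIntegrable_of_mem_Icc ⟨hT, le_rfl⟩))
      (fun _ => hGle)
    have hlim : Tendsto (fun n => G T * (K * T) ^ n / n !) atTop (𝓝 0) := by
      simpa [mul_div_assoc] using
        (FloorSemiring.tendsto_pow_div_factorial_atTop (K * T)).const_mul (G T)
    exact ge_of_tendsto' hlim fun n => hiter n T ⟨hT, le_rfl⟩
  have hzero := (integral_eq_zero_iff_of_nonneg_ae (ae_of_all _ hg0)
    (hg.intervalIntegrable_of_mem_Icc ⟨hT, le_rfl⟩)).mp
    (le_antisymm hGT (integral_nonneg hT fun s _ => hg0 s))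
  rwa [Ioc_eq_empty (not_lt.mpr hT), union_empty, Measure.restrict_congr_set Ioc_ae_eq_Icc]
    at hzero

lemma LipschitzWith.abs_le_abs_add_mul_abs {u : ℝ → ℝ} {K : NNReal} (hu : LipschitzWith K u)
    (x : ℝ) : |u x| ≤ |u 0| + K * |x| := by
  have := hu.dist_le_mul x 0
  rw [Real.dist_eq, Real.dist_eq, sub_zero] at this
  linarith [abs_sub_abs_le_abs_sub (u x) (u 0)]

lemma LipschitzWith.integrableOn_comp {u : ℝ → ℝ} {K : NNReal} (hu : LipschitzWith K u)
    {X : ℝ → ℝ} {s : Set ℝ} (hs : volume s ≠ ⊤) (hX : IntegrableOn X s) :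
    IntegrableOn (fun t => u (X t)) s :=
  Integrable.mono' ((integrableOn_const hs).add (hX.abs.const_mul K))
    (hu.continuous.comp_aestronglyMeasurable hX.aestronglyMeasurable)
    (ae_of_all _ fun t => hu.abs_le_abs_add_mul_abs (X t))

lemma MeasureTheory.IntegrableOn.of_tendsto_of_abs_le {s : Set ℝ} (hs : MeasurableSet s)
    {F : ℕ → ℝ → ℝ} {X g : ℝ → ℝ} (hF : ∀ n, IntegrableOn (F n) s) (hg : IntegrableOn g s)
    (hbound : ∀ n, ∀ t ∈ s, |F n t| ≤ g t) (hlim : ∀ t ∈ s, Tendsto (F · t) atTop (𝓝 (X t))) :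
    IntegrableOn X s := by
  refine Integrable.mono' hg (aestronglyMeasurable_of_tendsto_ae atTop
    (fun n => (hF n).aestronglyMeasurable) ?_) ?_
  · filter_upwards [ae_restrict_mem hs] with t ht using hlim t ht
  · filter_upwards [ae_restrict_mem hs] with t ht
    exact le_of_tendsto' (hlim t ht).abs fun n => hbound n t ht

section Picard

variable {u f : ℝ → ℝ} {K : NNReal} {T : ℝ}

noncomputable def picardMap (u f X : ℝ → ℝ) (t : ℝ) : ℝ := (∫ s in (0:ℝ)..t, u (X s)) + f t

noncomputable def picardSeq (u f : ℝ → ℝ) : ℕ → ℝ → ℝ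
  | 0 => f
  | n + 1 => picardMap u f (picardSeq u f n)

lemma integrableOn_picardMap (hu : LipschitzWith K u) (hf : IntegrableOn f (Icc 0 T))
    {X : ℝ → ℝ} (hX : IntegrableOn X (Icc 0 T)) : IntegrableOn (picardMap u f X) (Icc 0 T) :=
  (hu.integrableOn_comp (by simp) hX).continuousOn_primitive_zero.integrableOn_Icc.add hf

lemma abs_picardMap_sub_le (hu : LipschitzWith K u) {X Y : ℝ → ℝ}
    (hX : IntegrableOn X (Icc 0 T)) (hY : IntegrableOn Y (Icc 0 T)) {t : ℝ} (ht : t ∈ Icc 0 T) :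
    |picardMap u f X t - picardMap u f Y t| ≤ K * ∫ s in (0:ℝ)..t, |X s - Y s| := by
  have huX := (hu.integrableOn_comp (by simp) hX).intervalIntegrable_of_mem_Icc ht
  have huY := (hu.integrableOn_comp (by simp) hY).intervalIntegrable_of_mem_Icc ht
  rw [picardMap, picardMap, add_sub_add_right_eq_sub, ← integral_sub huX huY,
    ← intervalIntegral.integral_const_mul]
  refine (abs_integral_le_integral_abs ht.1).trans <|
    integral_mono_on ht.1 (huX.sub huY).abs
      (((hX.sub hY).intervalIntegrable_of_mem_Icc ht).abs.const_mul K) fun s _ => ?_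
  simpa [Real.dist_eq] using hu.dist_le_mul (X s) (Y s)

lemma tendsto_picardMap (hu : LipschitzWith K u) {X g : ℝ → ℝ} {Xn : ℕ → ℝ → ℝ}
    (hXn : ∀ n, IntegrableOn (Xn n) (Icc 0 T)) (hg : IntegrableOn g (Icc 0 T))
    (hbound : ∀ n, ∀ s ∈ Icc 0 T, |Xn n s| ≤ g s)
    (hlim : ∀ s ∈ Icc 0 T, Tendsto (Xn · s) atTop (𝓝 (X s))) {t : ℝ} (ht : t ∈ Icc 0 T) :
    Tendsto (fun n => picardMap u f (Xn n) t) atTop (𝓝 (picardMap u f X t)) := by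
  have hsub := uIoc_zero_subset_Icc ht
  refine Tendsto.add_const _ <| tendsto_integral_filter_of_dominated_convergence
    (fun s => |u 0| + K * g s)
    (Eventually.of_forall fun n =>
      ((hu.integrableOn_comp (by simp) (hXn n)).mono_set hsub).aestronglyMeasurable)
    (Eventually.of_forall fun n => ae_of_all _ fun s hs =>
      (hu.abs_le_abs_add_mul_abs _).trans (by gcongr; exact hbound n s (hsub hs)))
    ((integrableOn_const (by simp)).add (hg.const_mul K) |>.intervalIntegrable_of_mem_Icc ht)
    (ae_of_all _ fun s hs => (hu.continuous.tendsto _).comp (hlim s (hsub hs)))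

lemma integrableOn_picardSeq (hu : LipschitzWith K u) (hf : IntegrableOn f (Icc 0 T)) (n : ℕ) :
    IntegrableOn (picardSeq u f n) (Icc 0 T) := by
  induction n with
  | zero => exact hf
  | succ n ih => exact integrableOn_picardMap hu hf ih

lemma dist_picardSeq_succ_le (hu : LipschitzWith K u)
    (hf : IntegrableOn f (Icc 0 T)) (n : ℕ) {t : ℝ} (ht : t ∈ Icc 0 T) :
    dist (picardSeq u f n t) (picardSeq u f (n + 1) t)
      ≤ (∫ s in Icc 0 T, |u (f s)|) * (K * T) ^ n / n ! := by
  have hP := integrableOn_picardSeq hu hf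
  have hbase : ∀ t ∈ Icc 0 T,
      |picardSeq u f 1 t - picardSeq u f 0 t| ≤ ∫ s in Icc 0 T, |u (f s)| := fun t ht =>
    calc |picardSeq u f 1 t - picardSeq u f 0 t| = |∫ s in (0:ℝ)..t, u (f s)| := by
          simp [picardSeq, picardMap]
      _ ≤ ∫ s in Ι 0 t, |u (f s)| := by
          simpa only [Real.norm_eq_abs] using
            norm_integral_le_integral_norm_uIoc (f := fun s => u (f s))
      _ ≤ ∫ s in Icc 0 T, |u (f s)| :=
          setIntegral_mono_set (hu.integrableOn_comp (by simp) hf).abs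
            (ae_of_all _ fun _ => abs_nonneg _) (uIoc_zero_subset_Icc ht).eventuallyLE
  have hiter := le_mul_pow_div_factorial_of_le_mul_integral K.coe_nonneg
    (fun n => ((hP (n + 1)).sub (hP n)).abs) hbase
    (fun n t ht => abs_picardMap_sub_le hu (hP (n + 1)) (hP n) ht) n t ht
  rw [dist_comm, Real.dist_eq]
  refine hiter.trans ?_
  have hKt : 0 ≤ (K : ℝ) * t := mul_nonneg K.coe_nonneg ht.1
  gcongr
  exact ht.2

theorem exists_integrableOn_picardMap_eq (hT : 0 ≤ T) (hu : LipschitzWith K u)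
    (hf : IntegrableOn f (Icc 0 T)) :
    ∃ X, IntegrableOn X (Icc 0 T) ∧ ∀ t ∈ Icc 0 T, picardMap u f X t = X t := by
  set P := picardSeq u f
  have hP := integrableOn_picardSeq hu hf
  set C := ∫ s in Icc 0 T, |u (f s)|
  set d : ℕ → ℝ := fun n => C * (K * T) ^ n / (n !)
  have hC : 0 ≤ C := setIntegral_nonneg measurableSet_Icc fun _ _ => abs_nonneg _
  have hd0 : ∀ n, 0 ≤ d n := fun n => by positivity
  have hd : Summable d := by
    simpa [d, mul_div_assoc] using (Real.summable_pow_div_factorial (K * T)).mul_left C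
  have hdist : ∀ t ∈ Icc 0 T, ∀ n, dist (P n t) (P (n + 1) t) ≤ d n :=
    fun t ht n => dist_picardSeq_succ_le hu hf n ht
  set X : ℝ → ℝ := fun t => limUnder atTop (P · t)
  have hlim : ∀ t ∈ Icc 0 T, Tendsto (P · t) atTop (𝓝 (X t)) := fun t ht =>
    (cauchySeq_of_dist_le_of_summable d (hdist t ht) hd).tendsto_limUnder
  have hbound : ∀ n, ∀ t ∈ Icc 0 T, |P n t| ≤ |f t| + ∑' k, d k := by
    intro n t ht
    have := (dist_le_range_sum_of_dist_le (f := (P · t)) n fun _ ↦ hdist t ht _).trans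
      (hd.sum_le_tsum _ fun i _ => hd0 i)
    rw [Real.dist_eq, abs_sub_comm, show P 0 t = f t from rfl] at this
    linarith [abs_sub_abs_le_abs_sub (P n t) (f t)]
  have hg : IntegrableOn (fun t => |f t| + ∑' k, d k) (Icc 0 T) :=
    hf.abs.add (integrableOn_const (by simp))
  refine ⟨X, .of_tendsto_of_abs_le measurableSet_Icc hP hg hbound hlim, fun t ht =>
    tendsto_nhds_unique (tendsto_picardMap hu hP hg hbound hlim ht)
      ((hlim t ht).comp (tendsto_add_atTop_nat 1))⟩

theorem ae_eq_of_picardMap_ae_eq (hT : 0 ≤ T) (hu : LipschitzWith K u) {X Y : ℝ → ℝ}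
    (hX : IntegrableOn X (Icc 0 T)) (hY : IntegrableOn Y (Icc 0 T))
    (hXfix : ∀ᵐ t ∂volume.restrict (Icc 0 T), X t = picardMap u f X t)
    (hYfix : ∀ᵐ t ∂volume.restrict (Icc 0 T), Y t = picardMap u f Y t) :
    Y =ᵐ[volume.restrict (Icc 0 T)] X := by
  have hle : ∀ᵐ t ∂volume.restrict (Icc 0 T),
      |Y t - X t| ≤ K * ∫ s in (0:ℝ)..t, |Y s - X s| := by
    filter_upwards [hXfix, hYfix, ae_restrict_mem measurableSet_Icc] with t hXt hYt ht
    rw [hXt, hYt]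
    exact abs_picardMap_sub_le hu hY hX ht
  filter_upwards [ae_eq_zero_of_le_mul_integral K.coe_nonneg hT (fun _ => abs_nonneg _)
    (hY.sub hX).abs hle] with t ht
  exact sub_eq_zero.mp (abs_eq_zero.mp ht)

end Picard

theorem stmt_12 (T : ℝ) (hT : 0 < T) (u : ℝ → ℝ) (K : NNReal)
    (hu : LipschitzWith K u) (f : ℝ → ℝ) (hf : IntegrableOn f (Set.Icc 0 T)) :
    ∃ X : ℝ → ℝ, IntegrableOn X (Set.Icc 0 T) ∧
      (∀ᵐ t ∂(volume.restrict (Set.Icc 0 T)),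
        X t = (∫ s in (0:ℝ)..t, u (X s)) + f t) ∧
      ∀ Y : ℝ → ℝ, IntegrableOn Y (Set.Icc 0 T) →
        (∀ᵐ t ∂(volume.restrict (Set.Icc 0 T)),
          Y t = (∫ s in (0:ℝ)..t, u (Y s)) + f t) →
        Y =ᵐ[volume.restrict (Set.Icc 0 T)] X := by
  obtain ⟨X, hX, hfix⟩ := exists_integrableOn_picardMap_eq hT.le hu hf
  have hXfix : ∀ᵐ t ∂(volume.restrict (Icc 0 T)), X t = picardMap u f X t := by
    filter_upwards [ae_restrict_mem measurableSet_Icc] with t ht using (hfix t ht).symm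
  exact ⟨X, hX, hXfix, fun Y hY hYfix => ae_eq_of_picardMap_ae_eq hT.le hu hX hY hXfix hYfix⟩
end

section
/- Suppose functions â, b̂, ĉ : [0,T] → ℝ satisfy: â is nondecreasing and positive, b̂ is absolutely continuous, â·b̂ is bounded, ĉ ∈ L²([0,T]), and ∫_0^T |b̂'(u)| (∫_0^u â²(z) ĉ²(u-z) dz)^{1/2} du < ∞. Define K̂(t,s) = â(s)[b̂(t) ĉ(t-s) - ∫_s^t b̂'(u) ĉ(u-s) du]. Then sup_{t ∈ [0,T]} ∫_0^t K̂(t,s)² ds < ∞. -/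
/-!
Since `a` is positive and nondecreasing, `|a s * b t| ≤ |a t * b t| ≤ M` and `a s ≤ a T`, so
`K(t,s)² ≤ 2 M² c(t-s)² + 2 a(T)² (∫ |b'(u)| |c(u-s)| du)²`. The first term integrates to at most
`M² ‖c‖₂²`. The second is the square of a convolution of `|b'| ∈ L¹` with `|c| ∈ L²`; Cauchy–Schwarz
against the measure `|b'(u)| du` followed by Tonelli bounds its integral by `‖b'‖₁² ‖c‖₂²`
(Young's inequality).
-/

open MeasureTheory intervalIntegral
open Set
open scoped ENNReal

theorem sq_lintegral_mul_le {α : Type*} [MeasurableSpace α] {μ : Measure α} {f h : α → ℝ≥0∞}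
    (hf : AEMeasurable f μ) (hfh : AEMeasurable (fun x => f x * h x ^ 2) μ) :
    (∫⁻ x, f x * h x ∂μ) ^ 2 ≤ (∫⁻ x, f x ∂μ) * ∫⁻ x, f x * h x ^ 2 ∂μ := by
  have hsqrt : ∀ y : ℝ≥0∞, (y ^ (2⁻¹ : ℝ)) ^ 2 = y := fun y => by
    rw [← ENNReal.rpow_natCast, ← ENNReal.rpow_mul]; norm_num
  have hsplit : ∀ x, f x ^ (2⁻¹ : ℝ) * (f x * h x ^ 2) ^ (2⁻¹ : ℝ) = f x * h x := by
    intro x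
    rw [ENNReal.mul_rpow_of_nonneg _ _ (by norm_num), ← mul_assoc,
      ← ENNReal.rpow_add_of_nonneg _ _ (by norm_num) (by norm_num), ← ENNReal.rpow_natCast,
      ← ENNReal.rpow_mul]
    norm_num
  have holder := ENNReal.lintegral_mul_norm_pow_le hf hfh (p := 2⁻¹) (q := 2⁻¹)
    (by norm_num) (by norm_num) (by norm_num)
  simp_rw [hsplit] at holder
  calc (∫⁻ x, f x * h x ∂μ) ^ 2
      ≤ ((∫⁻ x, f x ∂μ) ^ (2⁻¹ : ℝ) * (∫⁻ x, f x * h x ^ 2 ∂μ) ^ (2⁻¹ : ℝ)) ^ 2 := by gcongr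
    _ = _ := by rw [mul_pow, hsqrt, hsqrt]

theorem lintegral_sq_lintegral_mul_sub_le {G : Type*} [MeasurableSpace G] [AddCommGroup G]
    [MeasurableAdd₂ G] [MeasurableNeg G] {μ : Measure G} [SFinite μ] [μ.IsAddLeftInvariant]
    [μ.IsNegInvariant] {f g : G → ℝ≥0∞} (hf : AEMeasurable f μ) (hg : AEMeasurable g μ) :
    ∫⁻ s, (∫⁻ u, f u * g (u - s) ∂μ) ^ 2 ∂μ ≤ (∫⁻ u, f u ∂μ) ^ 2 * ∫⁻ x, g x ^ 2 ∂μ := by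
  have hF : AEMeasurable (fun p : G × G => f p.1 * g (p.1 - p.2) ^ 2) (μ.prod μ) :=
    hf.comp_fst.mul ((hg.pow_const 2).comp_quasiMeasurePreserving
      (quasiMeasurePreserving_sub_of_right_invariant μ μ))
  calc ∫⁻ s, (∫⁻ u, f u * g (u - s) ∂μ) ^ 2 ∂μ
      ≤ ∫⁻ s, (∫⁻ u, f u ∂μ) * ∫⁻ u, f u * g (u - s) ^ 2 ∂μ ∂μ := by
        refine lintegral_mono fun s => sq_lintegral_mul_le hf ?_
        exact hf.mul ((hg.pow_const 2).comp_quasiMeasurePreserving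
          (measurePreserving_sub_right μ s).quasiMeasurePreserving)
    _ = (∫⁻ u, f u ∂μ) * ∫⁻ u, ∫⁻ s, f u * g (u - s) ^ 2 ∂μ ∂μ := by
        rw [lintegral_const_mul'' _ hF.lintegral_prod_left',
          lintegral_lintegral_swap (f := fun u s => f u * g (u - s) ^ 2) hF]
    _ = (∫⁻ u, f u ∂μ) * ∫⁻ u, f u * ∫⁻ x, g x ^ 2 ∂μ ∂μ := by
        congr 1
        refine lintegral_congr fun u => ?_
        rw [lintegral_const_mul'' (f := fun s => g (u - s) ^ 2) _
          ((hg.pow_const 2).comp_quasiMeasurePreserving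
            (Measure.measurePreserving_sub_left μ u).quasiMeasurePreserving),
          lintegral_sub_left_eq_self (fun x => g x ^ 2) u]
    _ = (∫⁻ u, f u ∂μ) ^ 2 * ∫⁻ x, g x ^ 2 ∂μ := by
        rw [lintegral_mul_const'' _ hf]; ring

theorem enorm_sub_sq_le (x y : ℝ) : ‖(x - y) ^ 2‖ₑ ≤ 2 * ‖x‖ₑ ^ 2 + 2 * ‖y‖ₑ ^ 2 :=
  calc ‖(x - y) ^ 2‖ₑ ≤ ‖2 * x ^ 2 + 2 * y ^ 2‖ₑ := by
        rw [enorm_le_iff_norm_le, Real.norm_of_nonneg (sq_nonneg _),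
          Real.norm_of_nonneg (by positivity)]
        nlinarith [sq_nonneg (x + y)]
    _ ≤ ‖2 * x ^ 2‖ₑ + ‖2 * y ^ 2‖ₑ := enorm_add_le _ _
    _ = 2 * ‖x‖ₑ ^ 2 + 2 * ‖y‖ₑ ^ 2 := by
        simp only [enorm_mul, enorm_pow, Real.enorm_eq_ofReal zero_le_two, ENNReal.ofReal_ofNat]

theorem aemeasurable_enorm_of_aemeasurable_sq {α : Type*} [MeasurableSpace α] {μ : Measure α}
    {f : α → ℝ} (hf : AEMeasurable (fun x => f x ^ 2) μ) : AEMeasurable (‖f ·‖ₑ) μ := by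
  have hsqrt : (‖f ·‖ₑ) = fun x => ENNReal.ofReal √(f x ^ 2) := by
    funext x; rw [Real.sqrt_sq_eq_abs, Real.enorm_eq_ofReal_abs]
  exact hsqrt ▸ hf.sqrt.ennreal_ofReal

theorem integral_le_toReal_of_lintegral_enorm_le {α : Type*} [MeasurableSpace α] {μ : Measure α}
    {f : α → ℝ} {B : ℝ≥0∞} (hB : B ≠ ∞) (hf : ∫⁻ x, ‖f x‖ₑ ∂μ ≤ B) : ∫ x, f x ∂μ ≤ B.toReal :=
  calc ∫ x, f x ∂μ ≤ ‖∫ x, f x ∂μ‖ₑ.toReal := (Real.le_norm_self _).trans_eq (toReal_enorm _).symm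
    _ ≤ B.toReal := ENNReal.toReal_mono hB ((enorm_integral_le_lintegral_enorm _).trans hf)

theorem enorm_intervalIntegral_mul_sub_le (f g : ℝ → ℝ) {s t T : ℝ} (hs : 0 ≤ s) (hst : s ≤ t)
    (htT : t ≤ T) :
    ‖∫ u in s..t, f u * g (u - s)‖ₑ ≤
      ∫⁻ u, (Icc 0 T).indicator (‖f ·‖ₑ) u * (Icc 0 T).indicator (‖g ·‖ₑ) (u - s) := by
  rw [intervalIntegral.integral_of_le hst]
  refine (enorm_integral_le_lintegral_enorm _).trans ?_
  refine le_of_eq_of_le (setLIntegral_congr_fun measurableSet_Ioc fun u hu => ?_)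
    (setLIntegral_le_lintegral _ _)
  have huI : u ∈ Icc 0 T := ⟨by linarith [hu.1], by linarith [hu.2]⟩
  have husI : u - s ∈ Icc 0 T := ⟨by linarith [hu.1], by linarith [hu.2]⟩
  rw [enorm_mul, indicator_of_mem huI, indicator_of_mem husI]

noncomputable def volterraKernel (a b db c : ℝ → ℝ) (t s : ℝ) : ℝ :=
  a s * (b t * c (t - s) - ∫ u in s..t, db u * c (u - s))

theorem enorm_volterraKernel_sq_le {T M : ℝ} {a b db c : ℝ → ℝ}
    (ha_mono : MonotoneOn a (Icc 0 T)) (ha_pos : ∀ t ∈ Icc (0:ℝ) T, 0 < a t)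
    (hM : ∀ t ∈ Icc (0:ℝ) T, |a t * b t| ≤ M) {s t : ℝ} (hs : 0 ≤ s) (hst : s ≤ t)
    (htT : t ≤ T) :
    ‖volterraKernel a b db c t s ^ 2‖ₑ ≤
      2 * ENNReal.ofReal M ^ 2 * (Icc 0 T).indicator (‖c ·‖ₑ) (t - s) ^ 2 +
      2 * ‖a T‖ₑ ^ 2 *
        (∫⁻ u, (Icc 0 T).indicator (‖db ·‖ₑ) u * (Icc 0 T).indicator (‖c ·‖ₑ) (u - s)) ^ 2 := by
  have hsI : s ∈ Icc 0 T := ⟨hs, hst.trans htT⟩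
  have htI : t ∈ Icc 0 T := ⟨hs.trans hst, htT⟩
  have hTI : T ∈ Icc 0 T := ⟨hs.trans (hst.trans htT), le_rfl⟩
  have hab : ‖a s * b t‖ₑ ≤ ENNReal.ofReal M := by
    rw [Real.enorm_eq_ofReal_abs]
    refine ENNReal.ofReal_le_ofReal (le_trans ?_ (hM t htI))
    rw [abs_mul, abs_mul, abs_of_pos (ha_pos s hsI), abs_of_pos (ha_pos t htI)]
    exact mul_le_mul_of_nonneg_right (ha_mono hsI htI hst) (abs_nonneg _)
  have ha : ‖a s‖ₑ ≤ ‖a T‖ₑ := by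
    rw [enorm_le_iff_norm_le, Real.norm_of_nonneg (ha_pos s hsI).le,
      Real.norm_of_nonneg (ha_pos T hTI).le]
    exact ha_mono hsI hTI hsI.2
  have htsI : t - s ∈ Icc 0 T := ⟨by linarith, by linarith⟩
  have hc : ‖c (t - s)‖ₑ = (Icc 0 T).indicator (‖c ·‖ₑ) (t - s) :=
    (indicator_of_mem htsI (‖c ·‖ₑ)).symm
  calc ‖volterraKernel a b db c t s ^ 2‖ₑ
      = ‖(a s * b t * c (t - s) - a s * ∫ u in s..t, db u * c (u - s)) ^ 2‖ₑ := by
        rw [volterraKernel]; ring_nf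
    _ ≤ 2 * ‖a s * b t * c (t - s)‖ₑ ^ 2 + 2 * ‖a s * ∫ u in s..t, db u * c (u - s)‖ₑ ^ 2 :=
        enorm_sub_sq_le _ _
    _ ≤ _ := by
        rw [enorm_mul, enorm_mul _ (∫ u in s..t, _), hc, mul_pow, mul_pow, ← mul_assoc,
          ← mul_assoc]
        gcongr
        exact enorm_intervalIntegral_mul_sub_le db c hs hst htT

theorem lintegral_enorm_volterraKernel_sq_le {T M : ℝ} {a b db c : ℝ → ℝ}
    (ha_mono : MonotoneOn a (Icc 0 T)) (ha_pos : ∀ t ∈ Icc (0:ℝ) T, 0 < a t)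
    (hM : ∀ t ∈ Icc (0:ℝ) T, |a t * b t| ≤ M) (hdb : AEMeasurable db (volume.restrict (Icc 0 T)))
    (hc : AEMeasurable (fun x => c x ^ 2) (volume.restrict (Icc 0 T))) {t : ℝ}
    (ht : t ∈ Icc 0 T) :
    ∫⁻ s in Ioc 0 t, ‖volterraKernel a b db c t s ^ 2‖ₑ ≤
      2 * ENNReal.ofReal M ^ 2 * (∫⁻ x in Icc 0 T, ‖c x‖ₑ ^ 2) +
      2 * ‖a T‖ₑ ^ 2 * ((∫⁻ u in Icc 0 T, ‖db u‖ₑ) ^ 2 * ∫⁻ x in Icc 0 T, ‖c x‖ₑ ^ 2) := by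
  set D := (Icc 0 T).indicator (‖db ·‖ₑ)
  set C := (Icc 0 T).indicator (‖c ·‖ₑ)
  have hD : AEMeasurable D := (aemeasurable_indicator_iff measurableSet_Icc).2 hdb.enorm
  have hC : AEMeasurable C :=
    (aemeasurable_indicator_iff measurableSet_Icc).2 (aemeasurable_enorm_of_aemeasurable_sq hc)
  have hCt : AEMeasurable (fun s => C (t - s) ^ 2) := (hC.comp_quasiMeasurePreserving
    (Measure.measurePreserving_sub_left volume t).quasiMeasurePreserving).pow_const 2
  have hC2 : ∫⁻ x, C x ^ 2 = ∫⁻ x in Icc 0 T, ‖c x‖ₑ ^ 2 := by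
    rw [← lintegral_indicator measurableSet_Icc]
    congr 1 with x
    by_cases hx : x ∈ Icc 0 T <;> simp [C, hx]
  rw [← lintegral_indicator measurableSet_Icc (‖db ·‖ₑ), ← hC2]
  calc ∫⁻ s in Ioc 0 t, ‖volterraKernel a b db c t s ^ 2‖ₑ
      ≤ ∫⁻ s in Ioc 0 t, (2 * ENNReal.ofReal M ^ 2 * C (t - s) ^ 2 +
          2 * ‖a T‖ₑ ^ 2 * (∫⁻ u, D u * C (u - s)) ^ 2) :=
        setLIntegral_mono' measurableSet_Ioc fun s hs =>
          enorm_volterraKernel_sq_le ha_mono ha_pos hM hs.1.le hs.2 ht.2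
    _ ≤ ∫⁻ s, (2 * ENNReal.ofReal M ^ 2 * C (t - s) ^ 2 +
          2 * ‖a T‖ₑ ^ 2 * (∫⁻ u, D u * C (u - s)) ^ 2) := setLIntegral_le_lintegral _ _
    _ = 2 * ENNReal.ofReal M ^ 2 * (∫⁻ s, C (t - s) ^ 2) +
          2 * ‖a T‖ₑ ^ 2 * ∫⁻ s, (∫⁻ u, D u * C (u - s)) ^ 2 := by
        rw [lintegral_add_left' (hCt.const_mul _), lintegral_const_mul' _ _ (by finiteness),
          lintegral_const_mul' _ _ (by finiteness)]
    _ ≤ 2 * ENNReal.ofReal M ^ 2 * (∫⁻ x, C x ^ 2) +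
          2 * ‖a T‖ₑ ^ 2 * ((∫⁻ u, D u) ^ 2 * ∫⁻ x, C x ^ 2) := add_le_add
        (congrArg (2 * ENNReal.ofReal M ^ 2 * ·) (lintegral_sub_left_eq_self _ t)).le
        (mul_le_mul_right (lintegral_sq_lintegral_mul_sub_le hD hC) _)

theorem stmt_19_general (T : ℝ) (a b db c : ℝ → ℝ)
    (ha_mono : MonotoneOn a (Set.Icc 0 T))
    (ha_pos : ∀ t ∈ Set.Icc (0:ℝ) T, 0 < a t)
    (hdb : IntegrableOn db (Set.Icc 0 T))
    (hab_bdd : ∃ M : ℝ, ∀ t ∈ Set.Icc (0:ℝ) T, |a t * b t| ≤ M)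
    (hc_L2 : IntegrableOn (fun s => (c s) ^ 2) (Set.Icc 0 T)) :
    ∃ M' : ℝ, ∀ t ∈ Set.Icc (0:ℝ) T,
      (∫ s in (0:ℝ)..t,
        (a s * (b t * c (t - s) - ∫ u in s..t, db u * c (u - s))) ^ 2) ≤ M' := by
  obtain ⟨M, hM⟩ := hab_bdd
  have hc_fin : ∫⁻ x in Icc 0 T, ‖c x‖ₑ ^ 2 ≠ ∞ := by
    simpa only [enorm_pow] using hc_L2.hasFiniteIntegral.ne
  set B := 2 * ENNReal.ofReal M ^ 2 * (∫⁻ x in Icc 0 T, ‖c x‖ₑ ^ 2) +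
    2 * ‖a T‖ₑ ^ 2 * ((∫⁻ u in Icc 0 T, ‖db u‖ₑ) ^ 2 * ∫⁻ x in Icc 0 T, ‖c x‖ₑ ^ 2)
  have hB : B ≠ ∞ := by simp [B, ENNReal.mul_eq_top, hc_fin, hdb.hasFiniteIntegral.ne]
  refine ⟨B.toReal, fun t ht => ?_⟩
  rw [integral_of_le ht.1]
  exact integral_le_toReal_of_lintegral_enorm_le hB
    (lintegral_enorm_volterraKernel_sq_le ha_mono ha_pos hM hdb.aemeasurable
      hc_L2.aemeasurable ht)

theorem stmt_19 (T : ℝ) (hT : 0 < T) (a b db c : ℝ → ℝ)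
    (ha_mono : MonotoneOn a (Set.Icc 0 T))
    (ha_pos : ∀ t ∈ Set.Icc (0:ℝ) T, 0 < a t)
    (hdb : IntegrableOn db (Set.Icc 0 T))
    (hb_ac : ∀ t ∈ Set.Icc (0:ℝ) T, b t = b 0 + ∫ u in (0:ℝ)..t, db u)
    (hab_bdd : ∃ M : ℝ, ∀ t ∈ Set.Icc (0:ℝ) T, |a t * b t| ≤ M)
    (hc_L2 : IntegrableOn (fun s => (c s) ^ 2) (Set.Icc 0 T))
    (hA : IntegrableOn
      (fun u => |db u| * (∫ z in (0:ℝ)..u, (a z) ^ 2 * (c (u - z)) ^ 2) ^ (1/2 : ℝ))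
      (Set.Icc 0 T)) :
    ∃ M' : ℝ, ∀ t ∈ Set.Icc (0:ℝ) T,
      (∫ s in (0:ℝ)..t,
        (a s * (b t * c (t - s) - ∫ u in s..t, db u * c (u - s))) ^ 2) ≤ M' :=
  stmt_19_general T a b db c ha_mono ha_pos hdb hab_bdd hc_L2
end
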